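/- Let n ≥ 2 be an integer, R > 0, ε > 0, and L_f : [0,R] → ℝ given by L_f(s) := ∫₀^s t^{n−1} f(t) dt for f with r^{n−1} f ∈ L¹((0,R)). Then the boundary value problem −ε r^{n−1}·(r^{1−n} w'(r))' + w(r)ⁿ/(n r^{n(n−1)}) = L_f(r) on (0,R), with w(0) = 0, w'(0) = 0, and w'(R) = ε R^{n−1}, has at most one nonnegative classical solution w ∈ C²([0,R]). -/

import Mathlib

open MeasureTheory

/-- `L_f(s) := ∫₀^s t^{n−1} f(t) dt`. -/
noncomputable def Lf (n : ℕ) (f : ℝ → ℝ) (s : ℝ) : ℝ :=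
  ∫ t in (0:ℝ)..s, t ^ (n - 1) * f t

/-- A classical solution `w ∈ C²([0,R])` of the perturbed second-order problem
`−ε r^{n−1}·(r^{1−n} w')' + wⁿ/(n r^{n(n−1)}) = L_f` on (0,R), with
`w(0) = w'(0) = 0` and `w'(R) = ε R^{n−1}`. -/
def WSol (n : ℕ) (R ε : ℝ) (f w : ℝ → ℝ) : Prop :=
  ContDiffOn ℝ 2 w (Set.Icc 0 R) ∧
  (∀ r ∈ Set.Ioo 0 R,
    -ε * r ^ (n - 1) * deriv (fun s => (s ^ (n - 1) : ℝ)⁻¹ * deriv w s) r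
      + w r ^ n / ((n : ℝ) * r ^ (n * (n - 1))) = Lf n f r) ∧
  w 0 = 0 ∧ deriv w 0 = 0 ∧ deriv w R = ε * R ^ (n - 1)

/-!
Comparison principle. If `v = w₁ - w₂` were positive somewhere, take a maximum point `r₀ > 0`
(note `v 0 = 0`). There the fluxes `gᵢ = r^{1-n} wᵢ'` agree: at an interior maximum because
`v' = 0`, at `r₀ = R` by the boundary condition. Just left of `r₀` we have `w₁ > w₂ ≥ 0`, so the
equation forces `g₁ - g₂` to be strictly increasing, hence negative before `r₀`; then `v' < 0`
there, and `v` is larger slightly left of `r₀`, contradicting maximality.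
-/

open Set Filter Topology

noncomputable def radialFlux (n : ℕ) (w : ℝ → ℝ) (s : ℝ) : ℝ :=
  (s ^ (n - 1))⁻¹ * deriv w s

theorem strictAntiOn_Icc_of_deriv_eq_mul {v D p : ℝ → ℝ} {a b : ℝ}
    (hv : ContinuousOn v (Icc a b)) (hD : ContinuousOn D (Ioc a b)) (hDb : D b = 0)
    (hD' : ∀ s ∈ Ioo a b, 0 < deriv D s) (hp : ∀ s ∈ Ioo a b, 0 < p s)
    (hvD : ∀ s ∈ Ioo a b, deriv v s = p s * D s) :
    StrictAntiOn v (Icc a b) := by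
  have hDmono : StrictMonoOn D (Ioc a b) :=
    strictMonoOn_of_deriv_pos (convex_Ioc a b) hD (by simpa only [interior_Ioc] using hD')
  refine strictAntiOn_of_deriv_neg (convex_Icc a b) hv fun s hs ↦ ?_
  rw [interior_Icc] at hs
  have hDs : D s < 0 := hDb ▸ hDmono (Ioo_subset_Ioc_self hs) ⟨hs.1.trans hs.2, le_rfl⟩ hs.2
  rw [hvD s hs]
  exact mul_neg_of_pos_of_neg (hp s hs) hDs

theorem ContinuousWithinAt.exists_Ioo_pos {v : ℝ → ℝ} {a b r : ℝ}
    (hv : ContinuousWithinAt v (Icc a b) r) (hr : r ∈ Ioc a b) (hvr : 0 < v r) :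
    ∃ l ∈ Ico a r, ∀ x ∈ Ioo l r, 0 < v x := by
  obtain ⟨l, hl, hpos⟩ := mem_nhdsLT_iff_exists_Ioo_subset.1 <|
    nhdsWithin_le_of_mem (Icc_mem_nhdsLT_of_mem hr) (hv.eventually (eventually_gt_nhds hvr))
  exact ⟨max l a, ⟨le_max_right _ _, max_lt hl hr.1⟩,
    fun x hx ↦ hpos (Ioo_subset_Ioo_left (le_max_left _ _) hx)⟩

theorem ContDiffOn.differentiableAt_deriv_of_mem_Ioo {w : ℝ → ℝ} {a b x : ℝ}
    (hw : ContDiffOn ℝ 2 w (Icc a b)) (hx : x ∈ Ioo a b) : DifferentiableAt ℝ (deriv w) x := by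
  have hw' : ContDiffOn ℝ 1 (deriv w) (Ioo a b) :=
    (hw.mono Ioo_subset_Icc_self).deriv_of_isOpen isOpen_Ioo (by norm_num)
  exact (hw'.differentiableOn one_ne_zero).differentiableAt (isOpen_Ioo.mem_nhds hx)

theorem ContDiffOn.continuousOn_deriv_Ioc {w : ℝ → ℝ} {a b : ℝ} (hab : a < b)
    (hw : ContDiffOn ℝ 1 w (Icc a b)) (hb : DifferentiableAt ℝ w b) :
    ContinuousOn (deriv w) (Ioc a b) := by
  have hU := uniqueDiffOn_Icc hab
  refine ((hw.continuousOn_derivWithin hU le_rfl).mono Ioc_subset_Icc_self).congr fun x hx ↦ ?_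
  rcases hx.2.lt_or_eq with hxb | rfl
  · exact (derivWithin_of_mem_nhds (Icc_mem_nhds hx.1 hxb)).symm
  · exact (hb.derivWithin (hU x (right_mem_Icc.2 hab.le))).symm

namespace WSol

variable {n : ℕ} {R ε : ℝ} {f w w₁ w₂ : ℝ → ℝ}

theorem differentiableAt_right (h : WSol n R ε f w) (hR : 0 < R) (hε : 0 < ε) :
    DifferentiableAt ℝ w R :=
  differentiableAt_of_deriv_ne_zero (h.2.2.2.2 ▸ by positivity)

theorem differentiableAt_of_mem_Ioo (h : WSol n R ε f w) {x : ℝ} (hx : x ∈ Ioo 0 R) :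
    DifferentiableAt ℝ w x :=
  (h.1.contDiffAt (Icc_mem_nhds hx.1 hx.2)).differentiableAt (by norm_num)

theorem differentiableAt_radialFlux (h : WSol n R ε f w) {x : ℝ} (hx : x ∈ Ioo 0 R) :
    DifferentiableAt ℝ (radialFlux n w) x := by
  have hinv : DifferentiableAt ℝ (fun s : ℝ ↦ (s ^ (n - 1))⁻¹) x :=
    (differentiableAt_pow _).inv (pow_ne_zero _ hx.1.ne')
  exact hinv.mul (h.1.differentiableAt_deriv_of_mem_Ioo hx)

theorem continuousOn_radialFlux (h : WSol n R ε f w) (hR : 0 < R) (hε : 0 < ε) :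
    ContinuousOn (radialFlux n w) (Ioc 0 R) :=
  ((continuous_pow _).continuousOn.inv₀ fun _ hx ↦ pow_ne_zero _ hx.1.ne').mul
    ((h.1.of_le (by norm_num)).continuousOn_deriv_Ioc hR (h.differentiableAt_right hR hε))

/-- Subtracting the two equations gives `ε s^{n-1} (g₁' - g₂') = (w₁ⁿ - w₂ⁿ) / (n s^{n(n-1)})`
for the fluxes `gᵢ = radialFlux n wᵢ`. -/
theorem deriv_radialFlux_lt (h1 : WSol n R ε f w₁) (h2 : WSol n R ε f w₂) (hn : n ≠ 0)
    (hε : 0 < ε) {s : ℝ} (hs : s ∈ Ioo 0 R) (h2nn : 0 ≤ w₂ s) (hlt : w₂ s < w₁ s) :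
    deriv (radialFlux n w₂) s < deriv (radialFlux n w₁) s := by
  have he1 := h1.2.1 s hs
  have he2 := h2.2.1 s hs
  change _ * deriv (radialFlux n w₁) s + _ = _ at he1
  change _ * deriv (radialFlux n w₂) s + _ = _ at he2
  have hweight : 0 < ε * s ^ (n - 1) := mul_pos hε (pow_pos hs.1 _)
  have hgap : 0 < w₁ s ^ n / (n * s ^ (n * (n - 1))) - w₂ s ^ n / (n * s ^ (n * (n - 1))) := by
    rw [div_sub_div_same]
    exact div_pos (sub_pos.2 (pow_lt_pow_left₀ hlt h2nn hn))
      (mul_pos (by exact_mod_cast Nat.pos_of_ne_zero hn) (pow_pos hs.1 _))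
  nlinarith

theorem deriv_eq_of_isMaxOn (h1 : WSol n R ε f w₁) (h2 : WSol n R ε f w₂) {r : ℝ}
    (hr : r ∈ Ioc 0 R) (hmax : IsMaxOn (w₁ - w₂) (Icc 0 R) r) : deriv w₁ r = deriv w₂ r := by
  rcases hr.2.lt_or_eq with hrR | rfl
  · have hr' : r ∈ Ioo 0 R := ⟨hr.1, hrR⟩
    have := (hmax.isLocalMax (Icc_mem_nhds hr.1 hrR)).deriv_eq_zero
    rw [deriv_sub (h1.differentiableAt_of_mem_Ioo hr') (h2.differentiableAt_of_mem_Ioo hr')] at this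
    linarith
  · rw [h1.2.2.2.2, h2.2.2.2.2]

theorem le_of_nonneg (h1 : WSol n R ε f w₁) (h2 : WSol n R ε f w₂) (hn : n ≠ 0) (hR : 0 < R)
    (hε : 0 < ε) (h2nn : ∀ r ∈ Icc 0 R, 0 ≤ w₂ r) : ∀ r ∈ Icc 0 R, w₁ r ≤ w₂ r := by
  by_contra! ⟨c, hc, hwc⟩
  set v := w₁ - w₂
  have hv : ContinuousOn v (Icc 0 R) := h1.1.continuousOn.sub h2.1.continuousOn
  obtain ⟨r₀, hr₀, hmax⟩ := isCompact_Icc.exists_isMaxOn (nonempty_Icc.2 hR.le) hv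
  have hvr₀ : 0 < v r₀ := (sub_pos.2 hwc).trans_le (hmax hc)
  have hr₀pos : 0 < r₀ := hr₀.1.lt_of_ne fun h ↦ by
    simp only [v, ← h, Pi.sub_apply, h1.2.2.1, h2.2.2.1, sub_self, lt_irrefl] at hvr₀
  obtain ⟨a, ⟨ha0, ha⟩, hpos⟩ := (hv r₀ hr₀).exists_Ioo_pos ⟨hr₀pos, hr₀.2⟩ hvr₀
  have hIcc : Icc a r₀ ⊆ Icc 0 R := Icc_subset_Icc ha0 hr₀.2
  have hIoo : Ioo a r₀ ⊆ Ioo 0 R := Ioo_subset_Ioo ha0 hr₀.2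
  have hanti : StrictAntiOn v (Icc a r₀) := by
    refine strictAntiOn_Icc_of_deriv_eq_mul (D := radialFlux n w₁ - radialFlux n w₂)
      (p := (· ^ (n - 1))) (hv.mono hIcc) ?_ ?_ (fun s hs ↦ ?_) (fun s hs ↦ ?_)
      (fun s hs ↦ ?_)
    · exact ((h1.continuousOn_radialFlux hR hε).sub (h2.continuousOn_radialFlux hR hε)).mono
        (Ioc_subset_Ioc ha0 hr₀.2)
    · simp only [Pi.sub_apply, radialFlux, h1.deriv_eq_of_isMaxOn h2 ⟨hr₀pos, hr₀.2⟩ hmax,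
        sub_self]
    · rw [deriv_sub (h1.differentiableAt_radialFlux (hIoo hs))
        (h2.differentiableAt_radialFlux (hIoo hs)), sub_pos]
      exact h1.deriv_radialFlux_lt h2 hn hε (hIoo hs) (h2nn s (Ioo_subset_Icc_self (hIoo hs)))
        (sub_pos.1 (hpos s hs))
    · exact pow_pos (hIoo hs).1 _
    · rw [deriv_sub (h1.differentiableAt_of_mem_Ioo (hIoo hs))
        (h2.differentiableAt_of_mem_Ioo (hIoo hs))]
      have : s ^ (n - 1) ≠ 0 := pow_ne_zero _ (hIoo hs).1.ne'
      simp only [Pi.sub_apply, radialFlux]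
      field_simp
  exact (hanti (left_mem_Icc.2 ha.le) (right_mem_Icc.2 ha.le) ha).not_ge
    (hmax (hIcc (left_mem_Icc.2 ha.le)))

end WSol

theorem stmt_3_general (n : ℕ) (hn : 2 ≤ n) (R ε : ℝ) (hR : 0 < R) (hε : 0 < ε)
    (f : ℝ → ℝ)
    (w₁ w₂ : ℝ → ℝ)
    (h1 : WSol n R ε f w₁) (h1nn : ∀ r ∈ Set.Icc 0 R, 0 ≤ w₁ r)
    (h2 : WSol n R ε f w₂) (h2nn : ∀ r ∈ Set.Icc 0 R, 0 ≤ w₂ r) :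
    Set.EqOn w₁ w₂ (Set.Icc 0 R) := fun r hr ↦
  le_antisymm (h1.le_of_nonneg h2 (by omega) hR hε h2nn r hr)
    (h2.le_of_nonneg h1 (by omega) hR hε h1nn r hr)

/-- the perturbed second-order boundary value problem has at most one
nonnegative classical solution. -/
theorem stmt_3 (n : ℕ) (hn : 2 ≤ n) (R ε : ℝ) (hR : 0 < R) (hε : 0 < ε)
    (f : ℝ → ℝ)
    (hfint : IntegrableOn (fun t => t ^ (n - 1) * f t) (Set.Ioo 0 R))
    (w₁ w₂ : ℝ → ℝ)
    (h1 : WSol n R ε f w₁) (h1nn : ∀ r ∈ Set.Icc 0 R, 0 ≤ w₁ r)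
    (h2 : WSol n R ε f w₂) (h2nn : ∀ r ∈ Set.Icc 0 R, 0 ≤ w₂ r) :
    Set.EqOn w₁ w₂ (Set.Icc 0 R) :=
  stmt_3_general n hn R ε hR hε f w₁ w₂ h1 h1nn h2 h2nn
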